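/- If E is a centrally orthocomplete generalized pseudoeffect algebra (COGPEA) and (π_i)_{i∈I} is a pairwise disjoint family in ΓEX(E), then the supremum ⋁_{i∈I} π_i exists in the boolean algebra ΓEX(E) and for every e ∈ E one has (⋁_{i∈I} π_i)e = ⋁_{i∈I} π_i e = ⊕_{i∈I} π_i e. Consequently, the exocenter ΓEX(E) of a COGPEA is a complete boolean algebra. -/

import Mathlib

/- Common framework: generalized pseudoeffect algebras (GPEAs), after
   Foulis, Pulmannová, Vinceková, "The exocenter and type decompositions for
   generalized pseudoeffect algebras".
   A partial binary operation ⊕ is represented by its graph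
   `R : E → E → E → Prop`, where `R a b s` means "a ⊕ b is defined and equals s". -/

universe u v

namespace GPEApaper

/-- Raw data of a partial algebra: the graph of a partial binary operation
together with a zero element. -/
structure PartialAlg (E : Type u) where
  R : E → E → E → Prop
  zero : E

namespace PartialAlg

variable {E : Type u} (A : PartialAlg E)

/-- The axioms (GPEA1)–(GPEA5) of a generalized pseudoeffect algebra,
including the functionality (well-definedness) of the partial operation. -/
def IsGPEA : Prop :=
  -- ⊕ is a partial operation (single-valued)
  (∀ a b c d : E, A.R a b c → A.R a b d → c = d) ∧
  -- (GPEA1) associativity, both directions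
  (∀ a b c ab abc : E, A.R a b ab → A.R ab c abc → ∃ bc, A.R b c bc ∧ A.R a bc abc) ∧
  (∀ a b c bc abc : E, A.R b c bc → A.R a bc abc → ∃ ab, A.R a b ab ∧ A.R ab c abc) ∧
  -- (GPEA2) conjugacy
  (∀ a b s : E, A.R a b s → (∃ d, A.R d a s) ∧ (∃ e, A.R b e s)) ∧
  -- (GPEA3) cancellation
  (∀ a b c s : E, A.R a b s → A.R a c s → b = c) ∧
  (∀ a b c s : E, A.R b a s → A.R c a s → b = c) ∧
  -- (GPEA4) positivity
  (∀ a b : E, A.R a b A.zero → a = A.zero ∧ b = A.zero) ∧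
  -- (GPEA5) zero element
  (∀ a : E, A.R a A.zero a ∧ A.R A.zero a a)

/-- a ⊕ b is defined. -/
def Defined (a b : E) : Prop := ∃ s, A.R a b s

/-- The induced partial order: a ≤ b iff a ⊕ x = b for some x. -/
def le (a b : E) : Prop := ∃ x, A.R a x b

/-- Orthogonality: p ⊥ q iff p ⊕ q and q ⊕ p both exist and are equal. -/
def perp (a b : E) : Prop := ∃ s, A.R a b s ∧ A.R b a s

/-- b is an upper bound of the set S. -/
def IsUB (S : Set E) (b : E) : Prop := ∀ a ∈ S, A.le a b

/-- s is the supremum (least upper bound) of the set S in (E, ≤). -/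
def IsSup (S : Set E) (s : E) : Prop := A.IsUB S s ∧ ∀ b, A.IsUB S b → A.le s b

/-- s is the infimum (greatest lower bound) of the set S in (E, ≤). -/
def IsInf (S : Set E) (s : E) : Prop :=
  (∀ a ∈ S, A.le s a) ∧ ∀ b, (∀ a ∈ S, A.le b a) → A.le b s

/-- An ideal of a GPEA. -/
def IsIdeal (I : Set E) : Prop :=
  I.Nonempty ∧ (∀ a ∈ I, ∀ b, A.le b a → b ∈ I) ∧
    ∀ a ∈ I, ∀ b ∈ I, ∀ s, A.R a b s → s ∈ I

/-- E = S ⊕ S′ : S and S′ are ideals, elements of S are orthogonal to elements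
of S′, and every element of E has a unique decomposition a = a₁ ⊕ a₂ with
a₁ ∈ S, a₂ ∈ S′. -/
def IsDirectSum (S S' : Set E) : Prop :=
  A.IsIdeal S ∧ A.IsIdeal S' ∧ (∀ a ∈ S, ∀ b ∈ S', A.perp a b) ∧
    ∀ a : E, ∃! p : E × E, p.1 ∈ S ∧ p.2 ∈ S' ∧ A.R p.1 p.2 a

/-- A central ideal (direct summand). -/
def IsCentralIdeal (S : Set E) : Prop := ∃ S', A.IsDirectSum S S'

/-- A normal ideal. -/
def IsNormalIdeal (I : Set E) : Prop :=
  A.IsIdeal I ∧ ∀ a x y s : E, A.R a x s → A.R y a s → (x ∈ I ↔ y ∈ I)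

/-- The axioms (EXC1)–(EXC4): π belongs to the exocenter ΓEX(E). -/
def IsExo (π : E → E) : Prop :=
  (∀ e f s, A.R e f s → A.R (π e) (π f) (π s)) ∧
  (∀ e, π (π e) = π e) ∧
  (∀ e, A.le (π e) e) ∧
  (∀ e f, π e = e → π f = A.zero → A.perp e f)

/-- For a ≤ b, `A.rdiv a b` is the element a/b, i.e. the unique x with
a ⊕ x = b (chosen by Hilbert choice when it exists). -/
noncomputable def rdiv (a b : E) : E :=
  letI : Nonempty E := ⟨A.zero⟩
  Classical.epsilon fun x => A.R a x b

/-- For π in the exocenter, π′ e := (π e)/e. -/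
noncomputable def exoCompl (π : E → E) : E → E := fun e => A.rdiv (π e) e

/-- The order on the exocenter: ξ ≤ π iff ξ = ξ ∘ π. -/
def exoLe (_A : PartialAlg E) (ξ π : E → E) : Prop := ξ = ξ ∘ π

/-- Disjointness in the boolean algebra ΓEX(E): the meet (= composition)
of ξ and π is the zero map. -/
def exoDisjoint (ξ π : E → E) : Prop := ∀ e, ξ (π e) = A.zero

/-- The join in the boolean algebra ΓEX(E): π ∨ ξ = (π′ ∘ ξ′)′. -/
noncomputable def exoSup (π ξ : E → E) : E → E :=
  A.exoCompl (A.exoCompl π ∘ A.exoCompl ξ)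

/-- σ is the least upper bound of a set S of exocenter elements,
with respect to the order of the boolean algebra ΓEX(E). -/
def IsExoLUB (S : Set (E → E)) (σ : E → E) : Prop :=
  A.IsExo σ ∧ (∀ π ∈ S, A.exoLe π σ) ∧
    ∀ β, A.IsExo β → (∀ π ∈ S, A.exoLe π β) → A.exoLe σ β

/-- A central element (C1)–(C4). -/
def Central (c : E) : Prop :=
  (∀ a : E, ∃ a₁ a₂, A.le a₁ c ∧ A.Defined a₂ c ∧ A.R a₁ a₂ a) ∧
  (∀ a b : E, A.le a c → A.Defined b c → A.perp a b) ∧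
  (∀ a b s : E, A.le a c → A.le b c → A.R a b s → A.le s c) ∧
  (∀ a b ab : E, A.Defined a c → A.Defined b c → A.R a b ab → A.Defined ab c)

/-- `A.ListSumsTo [e₁, …, eₙ] s` : the orthosum e₁ ⊕ (e₂ ⊕ (⋯ ⊕ eₙ)) is
defined and equals s (empty orthosum is 0). -/
def ListSumsTo (A : PartialAlg E) : List E → E → Prop
  | [], s => s = A.zero
  | a :: l, s => ∃ t, A.ListSumsTo l t ∧ A.R a t s

/-- The finite subfamily indexed by F is orthogonal with orthosum s:
every enumeration of F yields the orthosum s. -/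
def FinsetSumsTo {ι : Type v} (e : ι → E) (F : Finset ι) (s : E) : Prop :=
  ∀ l : List ι, l.Nodup →
    (letI : DecidableEq ι := Classical.decEq ι; l.toFinset) = F →
    A.ListSumsTo (l.map e) s

/-- A family is orthogonal iff every finite subfamily is orthogonal
(all enumerations have a common orthosum). -/
def IsOrthogonal {ι : Type v} (e : ι → E) : Prop :=
  ∀ F : Finset ι, ∃ s, A.FinsetSumsTo e F s

/-- A family is orthosummable with orthosum s iff it is orthogonal and s is
the supremum of its finite partial orthosums. -/
def IsOrthosum {ι : Type v} (e : ι → E) (s : E) : Prop :=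
  A.IsOrthogonal e ∧ A.IsSup {t | ∃ F : Finset ι, A.FinsetSumsTo e F t} s

/-- A family (eᵢ) is ΓEX-orthogonal iff there is a pairwise disjoint family
(πᵢ) in the exocenter with πᵢ eᵢ = eᵢ for all i. -/
def GEXOrthogonal {ι : Type v} (e : ι → E) : Prop :=
  ∃ π : ι → E → E, (∀ i, A.IsExo (π i)) ∧
    (∀ i j, i ≠ j → A.exoDisjoint (π i) (π j)) ∧ ∀ i, π i (e i) = e i

/-- E is centrally orthocomplete: (CO1) every ΓEX-orthogonal family is
orthosummable, and (CO2) orthosums respect one-sided summability. -/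
def IsCOGPEA : Prop :=
  (∀ {ι : Type u} (e : ι → E), A.GEXOrthogonal e → ∃ s, A.IsOrthosum e s) ∧
  (∀ {ι : Type u} (e : ι → E) (s : E), A.GEXOrthogonal e → A.IsOrthosum e s →
    ∀ a : E, ((∀ i, A.Defined a (e i)) → A.Defined a s) ∧
             ((∀ i, A.Defined (e i) a) → A.Defined s a))

/-- γ is the exocentral cover of e: the smallest element of ΓEX(E) fixing e. -/
def IsExoCover (e : E) (γ : E → E) : Prop :=
  A.IsExo γ ∧ γ e = e ∧ ∀ π, A.IsExo π → π e = e → A.exoLe γ π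

/-- The restriction of the partial algebra to a subset containing 0 (with the
operation defined whenever it is defined in E and the result lies in the subset). -/
def restrictSet (S : Set E) (h0 : A.zero ∈ S) : PartialAlg S where
  R a b s := A.R a.1 b.1 s.1
  zero := ⟨A.zero, h0⟩

/-- The axioms (PEA1)–(PEA4) of a pseudoeffect algebra with unit `one`
(including single-valuedness of the partial operation). -/
def IsPEA (one : E) : Prop :=
  (∀ a b c d : E, A.R a b c → A.R a b d → c = d) ∧
  -- (PEA1)
  (∀ a b c ab abc : E, A.R a b ab → A.R ab c abc → ∃ bc, A.R b c bc ∧ A.R a bc abc) ∧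
  (∀ a b c bc abc : E, A.R b c bc → A.R a bc abc → ∃ ab, A.R a b ab ∧ A.R ab c abc) ∧
  -- (PEA2)
  (∀ a : E, ∃! d, A.R a d one) ∧
  (∀ a : E, ∃! e, A.R e a one) ∧
  -- (PEA3)
  (∀ a b s : E, A.R a b s → (∃ d, A.R d a s) ∧ (∃ e, A.R b e s)) ∧
  -- (PEA4)
  (∀ a s : E, A.R one a s ∨ A.R a one s → a = A.zero)

end PartialAlg

end GPEApaper

/-!
For every `e` the family `(πᵢ e)ᵢ` is ΓEX-orthogonal, so (CO1) provides its orthosum `σ e`.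
Finite orthosums of a ΓEX-orthogonal family lie below every upper bound of the family, hence
`σ e` is also the supremum of the `πᵢ e`, and `σ e` only depends on the values `πᵢ e`; this gives
idempotence, `σ e ≤ e`, and the least-upper-bound property of `σ` in `ΓEX(E)`. Additivity of `σ`
comes from (CO2), which makes `σ e ⊕ σ f` defined, together with the fact that finite orthosums of
two families fixed by the same `πᵢ` can be interchanged with `⊕`.

Completeness of `ΓEX(E)` is then order theory: a boolean algebra in which every pairwise disjoint
set has a supremum is complete.
-/

section CompleteBooleanAlgebra

variable {α : Type*} [BooleanAlgebra α]

/-- Zorn's lemma gives a maximal pairwise disjoint set `M` of elements below members of `S`; for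
`s ∈ S`, maximality puts `s \ ⨆ M` into `M`, which forces `s \ ⨆ M = ⊥`. -/
theorem exists_isLUB_of_forall_pairwise_disjoint
    (h : ∀ D : Set α, D.Pairwise Disjoint → ∃ d, IsLUB D d) (S : Set α) : ∃ d, IsLUB S d := by
  obtain ⟨M, hM⟩ := zorn_subset {D : Set α | D.Pairwise Disjoint ∧ ∀ x ∈ D, ∃ s ∈ S, x ≤ s} <| by
    intro c hc hchain
    refine ⟨⋃₀ c, ⟨?_, ?_⟩, fun _ => Set.subset_sUnion_of_mem⟩
    · exact (Set.pairwiseDisjoint_sUnion hchain.directedOn).2 fun D hD => (hc hD).1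
    · rintro x ⟨D, hD, hx⟩
      exact (hc hD).2 x hx
  obtain ⟨d, hd⟩ := h M hM.prop.1
  refine ⟨d, fun s hs => ?_, fun b hb => hd.2 fun x hx => ?_⟩
  · have hsd : s \ d ∈ M := hM.mem_of_prop_insert
      ⟨Set.pairwise_insert_of_symm.2 ⟨hM.prop.1, fun x hx _ =>
          disjoint_sdiff_self_left.mono_right (hd.1 hx)⟩,
        Set.forall_mem_insert.2 ⟨⟨s, hs, sdiff_le⟩, hM.prop.2⟩⟩
    exact sdiff_eq_bot_iff.1 (disjoint_sdiff_self_left.eq_bot_of_le (hd.1 hsd))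
  · obtain ⟨s, hs, hxs⟩ := hM.prop.2 x hx
    exact hxs.trans (hb hs)

noncomputable abbrev CompleteBooleanAlgebra.ofIsLUB (h : ∀ S : Set α, ∃ d, IsLUB S d) :
    CompleteBooleanAlgebra α where
  sSup S := (h S).choose
  isLUB_sSup S := (h S).choose_spec
  sInf S := (h (lowerBounds S)).choose
  isGLB_sInf S := isLUB_lowerBounds.1 (h (lowerBounds S)).choose_spec

end CompleteBooleanAlgebra

namespace GPEApaper.PartialAlg

variable {E : Type u} {A : PartialAlg E}

theorem le_of_R_left {a b s : E} (h : A.R a b s) : A.le a s := ⟨b, h⟩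

theorem perp.symm {a b : E} (h : A.perp a b) : A.perp b a :=
  let ⟨s, h₁, h₂⟩ := h
  ⟨s, h₂, h₁⟩

namespace IsGPEA

variable (hA : A.IsGPEA)
include hA

theorem R_unique {a b c d : E} (h₁ : A.R a b c) (h₂ : A.R a b d) : c = d :=
  hA.1 a b c d h₁ h₂

theorem assoc {a b c ab abc : E} (h₁ : A.R a b ab) (h₂ : A.R ab c abc) :
    ∃ bc, A.R b c bc ∧ A.R a bc abc :=
  hA.2.1 a b c ab abc h₁ h₂

theorem assoc' {a b c bc abc : E} (h₁ : A.R b c bc) (h₂ : A.R a bc abc) :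
    ∃ ab, A.R a b ab ∧ A.R ab c abc :=
  hA.2.2.1 a b c bc abc h₁ h₂

theorem exists_R_left {a b s : E} (h : A.R a b s) : ∃ d, A.R d a s :=
  (hA.2.2.2.1 a b s h).1

theorem exists_R_right {a b s : E} (h : A.R a b s) : ∃ d, A.R b d s :=
  (hA.2.2.2.1 a b s h).2

theorem cancel_left {a b c s : E} (h₁ : A.R a b s) (h₂ : A.R a c s) : b = c :=
  hA.2.2.2.2.1 a b c s h₁ h₂

theorem cancel_right {a b c s : E} (h₁ : A.R b a s) (h₂ : A.R c a s) : b = c :=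
  hA.2.2.2.2.2.1 a b c s h₁ h₂

theorem eq_zero_of_R_zero {a b : E} (h : A.R a b A.zero) : a = A.zero ∧ b = A.zero :=
  hA.2.2.2.2.2.2.1 a b h

theorem R_zero_right (a : E) : A.R a A.zero a := (hA.2.2.2.2.2.2.2 a).1

theorem R_zero_left (a : E) : A.R A.zero a a := (hA.2.2.2.2.2.2.2 a).2

theorem le_iff_exists_R_left {a b : E} : A.le a b ↔ ∃ x, A.R x a b :=
  ⟨fun ⟨_, h⟩ => hA.exists_R_left h, fun ⟨_, h⟩ => hA.exists_R_right h⟩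

theorem le_of_R_right {a b s : E} (h : A.R a b s) : A.le b s :=
  hA.le_iff_exists_R_left.2 ⟨a, h⟩

theorem le_refl (a : E) : A.le a a := ⟨A.zero, hA.R_zero_right a⟩

theorem le_trans {a b c : E} (h₁ : A.le a b) (h₂ : A.le b c) : A.le a c := by
  obtain ⟨x, hx⟩ := h₁
  obtain ⟨y, hy⟩ := h₂
  obtain ⟨xy, -, h⟩ := hA.assoc hx hy
  exact ⟨xy, h⟩

theorem le_antisymm {a b : E} (h₁ : A.le a b) (h₂ : A.le b a) : a = b := by
  obtain ⟨x, hx⟩ := h₁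
  obtain ⟨y, hy⟩ := h₂
  obtain ⟨xy, hxy, h⟩ := hA.assoc hx hy
  obtain rfl : xy = A.zero := hA.cancel_left h (hA.R_zero_right a)
  obtain rfl : x = A.zero := (hA.eq_zero_of_R_zero hxy).1
  exact hA.R_unique (hA.R_zero_right a) hx

theorem zero_le (a : E) : A.le A.zero a := ⟨a, hA.R_zero_left a⟩

theorem eq_zero_of_le_zero {a : E} (h : A.le a A.zero) : a = A.zero :=
  let ⟨_, hx⟩ := h
  (hA.eq_zero_of_R_zero hx).1

theorem R_mono {a a' b b' x y : E} (ha : A.le a a') (hb : A.le b b')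
    (hx : A.R a b x) (hy : A.R a' b' y) : A.le x y := by
  obtain ⟨p, hp⟩ := hA.le_iff_exists_R_left.1 ha
  obtain ⟨q, hq⟩ := hb
  obtain ⟨ab', hab', hy'⟩ := hA.assoc hp hy
  obtain ⟨ab, hab, habq⟩ := hA.assoc' hq hab'
  obtain rfl : ab = x := hA.R_unique hab hx
  exact hA.le_trans (le_of_R_left habq) (hA.le_of_R_right hy')

/-- `(x ⊕ y) ⊕ (g₁ ⊕ g₂) = (x ⊕ g₁) ⊕ (y ⊕ g₂)` when `y` and `g₁` commute. -/
theorem R_interchange {x y s g₁ g₂ g u v w₃ w₂ T : E}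
    (hxy : A.R x y s) (hg : A.R g₁ g₂ g) (hxg₁ : A.R x g₁ u) (hyg₂ : A.R y g₂ v)
    (hg₁y : A.R g₁ y w₃) (hyg₁ : A.R y g₁ w₃) (hg₁v : A.R g₁ v w₂) (hT : A.R u v T) :
    A.R s g T := by
  obtain ⟨g₁y, hg₁y', hw⟩ := hA.assoc' hyg₂ hg₁v
  obtain rfl : g₁y = w₃ := hA.R_unique hg₁y' hg₁y
  obtain ⟨g', hg', hyg⟩ := hA.assoc hyg₁ hw
  obtain rfl : g' = g := hA.R_unique hg' hg
  obtain ⟨w, hw', hxw⟩ := hA.assoc hxg₁ hT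
  obtain rfl : w = w₂ := hA.R_unique hw' hg₁v
  obtain ⟨xy, hxy', hfin⟩ := hA.assoc' hyg hxw
  obtain rfl : xy = s := hA.R_unique hxy' hxy
  exact hfin

theorem isSup_unique {S : Set E} {s t : E} (h₁ : A.IsSup S s) (h₂ : A.IsSup S t) : s = t :=
  hA.le_antisymm (h₁.2 t h₂.1) (h₂.2 s h₁.1)

theorem isSup_R_left {T : Set E} {u f Y : E} (hsup : A.IsSup T u) (hne : T.Nonempty)
    (hY : A.R f u Y) : A.IsSup {y | ∃ t ∈ T, A.R f t y} Y := by
  have hmk : ∀ t ∈ T, ∃ y, A.R f t y ∧ A.le y Y := by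
    intro t ht
    obtain ⟨z, hz⟩ := hsup.1 t ht
    obtain ⟨ft, hft, hftz⟩ := hA.assoc' hz hY
    exact ⟨ft, hft, le_of_R_left hftz⟩
  refine ⟨?_, fun b hb => ?_⟩
  · rintro y ⟨t, ht, hy⟩
    obtain ⟨y', hy', hle⟩ := hmk t ht
    rwa [hA.R_unique hy hy']
  obtain ⟨t₀, ht₀⟩ := hne
  obtain ⟨y₀, hy₀, -⟩ := hmk t₀ ht₀
  obtain ⟨b₁, hb₁⟩ := hA.le_trans (le_of_R_left hy₀) (hb y₀ ⟨t₀, ht₀, hy₀⟩)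
  have hub : ∀ t ∈ T, A.le t b₁ := by
    intro t ht
    obtain ⟨y, hy, -⟩ := hmk t ht
    obtain ⟨c, hc⟩ := hb y ⟨t, ht, hy⟩
    obtain ⟨tc, htc, hftc⟩ := hA.assoc hy hc
    obtain rfl : tc = b₁ := hA.cancel_left hftc hb₁
    exact le_of_R_left htc
  obtain ⟨z, hz⟩ := hsup.2 b₁ hub
  obtain ⟨fu, hfu, hfin⟩ := hA.assoc' hz hb₁
  obtain rfl : fu = Y := hA.R_unique hfu hY
  exact le_of_R_left hfin

theorem isSup_R_right {T : Set E} {u f X : E} (hsup : A.IsSup T u) (hne : T.Nonempty)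
    (hX : A.R u f X) : A.IsSup {y | ∃ t ∈ T, A.R t f y} X := by
  have hmk : ∀ t ∈ T, ∃ y, A.R t f y ∧ A.le y X := by
    intro t ht
    obtain ⟨w, hw⟩ := hA.le_iff_exists_R_left.1 (hsup.1 t ht)
    obtain ⟨tf, htf, hwtf⟩ := hA.assoc hw hX
    exact ⟨tf, htf, hA.le_of_R_right hwtf⟩
  refine ⟨?_, fun b hb => ?_⟩
  · rintro y ⟨t, ht, hy⟩
    obtain ⟨y', hy', hle⟩ := hmk t ht
    rwa [hA.R_unique hy hy']
  obtain ⟨t₀, ht₀⟩ := hne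
  obtain ⟨y₀, hy₀, -⟩ := hmk t₀ ht₀
  obtain ⟨b₂, hb₂⟩ := hA.le_iff_exists_R_left.1
    (hA.le_trans (hA.le_of_R_right hy₀) (hb y₀ ⟨t₀, ht₀, hy₀⟩))
  have hub : ∀ t ∈ T, A.le t b₂ := by
    intro t ht
    obtain ⟨y, hy, -⟩ := hmk t ht
    obtain ⟨d, hd⟩ := hA.le_iff_exists_R_left.1 (hb y ⟨t, ht, hy⟩)
    obtain ⟨dt, hdt, hdtf⟩ := hA.assoc' hy hd
    obtain rfl : dt = b₂ := hA.cancel_right hdtf hb₂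
    exact hA.le_of_R_right hdt
  obtain ⟨w, hw⟩ := hA.le_iff_exists_R_left.1 (hsup.2 b₂ hub)
  obtain ⟨uf, huf, hfin⟩ := hA.assoc hw hb₂
  obtain rfl : uf = X := hA.R_unique huf hX
  exact hA.le_of_R_right hfin

end IsGPEA

namespace IsExo

variable {π ξ : E → E}

theorem map_R (hπ : A.IsExo π) {e f s : E} (h : A.R e f s) : A.R (π e) (π f) (π s) :=
  hπ.1 e f s h

theorem idem (hπ : A.IsExo π) (e : E) : π (π e) = π e := hπ.2.1 e

theorem le_self (hπ : A.IsExo π) (e : E) : A.le (π e) e := hπ.2.2.1 e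

theorem perp (hπ : A.IsExo π) {e f : E} (he : π e = e) (hf : π f = A.zero) : A.perp e f :=
  hπ.2.2.2 e f he hf

theorem mono (hπ : A.IsExo π) {a b : E} (h : A.le a b) : A.le (π a) (π b) :=
  let ⟨x, hx⟩ := h
  ⟨π x, hπ.map_R hx⟩

theorem R_exoCompl (hπ : A.IsExo π) (e : E) : A.R (π e) (A.exoCompl π e) e :=
  Classical.epsilon_spec (hπ.le_self e)

section
variable (hA : A.IsGPEA)
include hA

theorem map_zero (hπ : A.IsExo π) : π A.zero = A.zero :=
  hA.cancel_left (hπ.map_R (hA.R_zero_right A.zero)) (hA.R_zero_right _)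

theorem map_eq_self_of_R (hπ : A.IsExo π) {a b s : E} (ha : π a = a) (hb : π b = b)
    (h : A.R a b s) : π s = s := by
  have h' := hπ.map_R h
  rw [ha, hb] at h'
  exact hA.R_unique h' h

theorem map_eq_zero_of_R (hπ : A.IsExo π) {a b s : E} (ha : π a = A.zero)
    (hb : π b = A.zero) (h : A.R a b s) : π s = A.zero := by
  have h' := hπ.map_R h
  rw [ha, hb] at h'
  exact hA.R_unique h' (hA.R_zero_right _)

theorem map_eq_zero_of_le (hπ : A.IsExo π) {a b : E} (hb : π b = A.zero) (h : A.le a b) :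
    π a = A.zero := by
  obtain ⟨x, hx⟩ := h
  have h' := hπ.map_R hx
  rw [hb] at h'
  exact (hA.eq_zero_of_R_zero h').1

theorem exoCompl_eq_of_R (hπ : A.IsExo π) {e x : E} (h : A.R (π e) x e) :
    A.exoCompl π e = x :=
  hA.cancel_left (hπ.R_exoCompl e) h

theorem map_exoCompl (hπ : A.IsExo π) (e : E) : π (A.exoCompl π e) = A.zero := by
  have h := hπ.map_R (hπ.R_exoCompl e)
  rw [hπ.idem] at h
  exact hA.cancel_left h (hA.R_zero_right _)

theorem exoCompl_eq_self (hπ : A.IsExo π) {a : E} (ha : π a = A.zero) :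
    A.exoCompl π a = a :=
  hπ.exoCompl_eq_of_R hA (by rw [ha]; exact hA.R_zero_left a)

theorem exoCompl_eq_zero (hπ : A.IsExo π) {a : E} (ha : π a = a) :
    A.exoCompl π a = A.zero :=
  hπ.exoCompl_eq_of_R hA (by rw [ha]; exact hA.R_zero_right a)

theorem eq_zero_of_le_of_map_eq_zero (hπ : A.IsExo π) {a b : E} (hb : π b = b)
    (ha : π a = A.zero) (h : A.le a b) : a = A.zero := by
  obtain ⟨y, hy⟩ := h
  have h' := hπ.map_R hy
  rw [ha, hb] at h'
  have hπy : π y = b := hA.cancel_left h' (hA.R_zero_left b)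
  obtain rfl : y = b := hA.le_antisymm (hA.le_of_R_right hy) (hπy ▸ hπ.le_self y)
  exact hA.cancel_right hy (hA.R_zero_left y)

theorem map_eq_self_of_le (hπ : A.IsExo π) {a b : E} (hb : π b = b) (h : A.le a b) :
    π a = a := by
  have hc := hπ.R_exoCompl a
  rw [hπ.eq_zero_of_le_of_map_eq_zero hA hb (hπ.map_exoCompl hA a)
    (hA.le_trans (hA.le_of_R_right hc) h)] at hc
  exact hA.R_unique (hA.R_zero_right _) hc

theorem comm (hπ : A.IsExo π) (hξ : A.IsExo ξ) (e : E) : π (ξ e) = ξ (π e) := by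
  have h := hπ.map_R (hξ.map_R (hπ.R_exoCompl e))
  rw [hπ.map_eq_zero_of_le hA (hπ.map_exoCompl hA e) (hξ.le_self _)] at h
  rw [hA.R_unique h (hA.R_zero_right _),
    hπ.map_eq_self_of_le hA (hπ.idem e) (hξ.le_self _)]

/-- Splitting `g = π g ⊕ π′ g`, both `g ⊕ f` and `f ⊕ g` equal `(x ⊕ π g) ⊕ (y ⊕ π′ g)`. -/
theorem perp_of_R (hπ : A.IsExo π) {x y f g : E} (hx : π x = x) (hy : π y = A.zero)
    (hxy : A.R x y f) (hgx : A.perp g x) (hgy : A.perp g y) : A.perp g f := by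
  obtain ⟨t₁, hgx₁, hxg₁⟩ := hgx
  obtain ⟨t₂, hgy₂, hyg₂'⟩ := hgy
  have hg := hπ.R_exoCompl g
  have hg₂ := hπ.map_exoCompl hA g
  have hu₁ : A.R (π g) x (π t₁) := by simpa only [hx] using hπ.map_R hgx₁
  have hu₂ : A.R x (π g) (π t₁) := by simpa only [hx] using hπ.map_R hxg₁
  obtain ⟨g₂y, hg₂y, ht₂a⟩ := hA.assoc hg hgy₂
  obtain ⟨yg₁, hyg₁, ht₂b⟩ := hA.assoc' hg hyg₂'
  obtain ⟨w₃, hg₁y, hyg₁'⟩ := hπ.perp (hπ.idem g) hy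
  obtain rfl : yg₁ = w₃ := hA.R_unique hyg₁ hyg₁'
  obtain ⟨v, hyg₂, ht₂c⟩ := hA.assoc hg₁y ht₂b
  obtain rfl : g₂y = v := hA.cancel_left ht₂a ht₂c
  have hv : π g₂y = A.zero := hπ.map_eq_zero_of_R hA hy hg₂ hyg₂
  obtain ⟨T, huv, -⟩ := hπ.perp (hπ.idem t₁) hv
  obtain ⟨w₂, hg₁v, -⟩ := hπ.perp (hπ.idem g) hv
  obtain ⟨_, hxg₂, hg₂x⟩ := hπ.perp hx hg₂
  obtain ⟨_, hxv, -⟩ := hπ.perp hx hv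
  exact ⟨T, hA.R_interchange hg hxy hu₁ hg₂y hxg₂ hg₂x hxv huv,
    hA.R_interchange hxy hg hu₂ hyg₂ hg₁y hyg₁' hg₁v huv⟩

theorem exoCompl (hπ : A.IsExo π) : A.IsExo (A.exoCompl π) := by
  refine ⟨fun e f s h => ?_, fun e => hπ.exoCompl_eq_self hA (hπ.map_exoCompl hA e),
    fun e => hA.le_of_R_right (hπ.R_exoCompl e), fun e f he hf => ?_⟩
  · obtain ⟨v, hv, hs⟩ := hA.assoc (hπ.R_exoCompl e) h
    obtain ⟨w, hw, hw'⟩ := hA.assoc' (hπ.R_exoCompl f) hv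
    obtain ⟨w₀, h₁, h₂⟩ := hπ.perp (hπ.idem f) (hπ.map_exoCompl hA e)
    obtain rfl : w = w₀ := hA.R_unique hw h₂
    obtain ⟨c, hc, hfc⟩ := hA.assoc h₁ hw'
    obtain ⟨ab, hab, habc⟩ := hA.assoc' hfc hs
    obtain rfl : ab = π s := hA.R_unique hab (hπ.map_R h)
    rwa [hπ.exoCompl_eq_of_R hA habc]
  · have hπe : π e = A.zero := by
      have h₁ := hπ.R_exoCompl e
      rw [he] at h₁
      exact hA.cancel_right h₁ (hA.R_zero_left e)
    have hπf : π f = f := by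
      have h₁ := hπ.R_exoCompl f
      rw [hf] at h₁
      exact hA.R_unique (hA.R_zero_right (π f)) h₁
    exact (hπ.perp hπf hπe).symm

theorem exoCompl_exoCompl (hπ : A.IsExo π) : A.exoCompl (A.exoCompl π) = π := by
  funext e
  obtain ⟨s, h₁, h₂⟩ := hπ.perp (hπ.idem e) (hπ.map_exoCompl hA e)
  obtain rfl : s = e := hA.R_unique h₁ (hπ.R_exoCompl e)
  exact (hπ.exoCompl hA).exoCompl_eq_of_R hA h₂

theorem comp (hπ : A.IsExo π) (hξ : A.IsExo ξ) : A.IsExo (π ∘ ξ) := by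
  refine ⟨fun e f s h => hπ.map_R (hξ.map_R h), fun e => ?_,
    fun e => hA.le_trans (hπ.le_self (ξ e)) (hξ.le_self e), fun e f he hf => ?_⟩
  · change π (ξ (π (ξ e))) = π (ξ e)
    rw [hξ.comm hA hπ, hπ.idem, hξ.idem]
  · change π (ξ e) = e at he
    change π (ξ f) = A.zero at hf
    have hπe : π e = e := by
      refine hA.le_antisymm (hπ.le_self e) ?_
      simpa only [← hπ.comm hA hξ, he] using hξ.le_self (π e)
    have hξe : ξ e = e :=
      hA.le_antisymm (hξ.le_self e) (by simpa only [he] using hπ.le_self (ξ e))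
    exact hξ.perp_of_R hA (hξ.idem f) (hξ.map_exoCompl hA f) (hξ.R_exoCompl f)
      (hπ.perp hπe hf) (hξ.perp hξe (hξ.map_exoCompl hA f))

end

end IsExo

def exoBot (A : PartialAlg E) : E → E := fun _ => A.zero

theorem exoLe_trans {ξ π ρ : E → E} (h₁ : A.exoLe ξ π) (h₂ : A.exoLe π ρ) : A.exoLe ξ ρ :=
  calc ξ = ξ ∘ π := h₁
    _ = ξ ∘ (π ∘ ρ) := by rw [← h₂]
    _ = (ξ ∘ π) ∘ ρ := rfl
    _ = ξ ∘ ρ := by rw [← h₁]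

theorem exoBot_exoLe (π : E → E) : A.exoLe A.exoBot π := rfl

theorem exoLe_id (π : E → E) : A.exoLe π id := rfl

theorem exoLe_comp {ρ π ξ : E → E} (h₁ : A.exoLe ρ π) (h₂ : A.exoLe ρ ξ) :
    A.exoLe ρ (π ∘ ξ) :=
  calc ρ = ρ ∘ ξ := h₂
    _ = (ρ ∘ π) ∘ ξ := by rw [← h₁]

theorem exoLe_refl {π : E → E} (hπ : A.IsExo π) : A.exoLe π π :=
  (funext hπ.idem).symm

theorem comp_exoLe_right {π ξ : E → E} (hξ : A.IsExo ξ) : A.exoLe (π ∘ ξ) ξ :=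
  funext fun e => by simp only [Function.comp_apply, hξ.idem]

section
variable (hA : A.IsGPEA)
include hA

theorem isExo_exoBot : A.IsExo A.exoBot :=
  ⟨fun _ _ _ _ => hA.R_zero_right A.zero, fun _ => rfl, hA.zero_le, fun e f he _ => by
    obtain rfl : e = A.zero := he.symm
    exact ⟨f, hA.R_zero_left f, hA.R_zero_right f⟩⟩

theorem isExo_id : A.IsExo (id : E → E) :=
  ⟨fun _ _ _ h => h, fun _ => rfl, hA.le_refl, fun e f _ hf => by
    obtain rfl : f = A.zero := hf
    exact ⟨e, hA.R_zero_right e, hA.R_zero_left e⟩⟩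

theorem exoCompl_exoBot : A.exoCompl A.exoBot = id :=
  funext fun e => (isExo_exoBot hA).exoCompl_eq_of_R hA (hA.R_zero_left e)

variable {π ξ ρ : E → E}

theorem exoLe_iff_comp_exoCompl (hξ : A.IsExo ξ) (hπ : A.IsExo π) :
    A.exoLe ξ π ↔ ξ ∘ A.exoCompl π = A.exoBot := by
  constructor
  · intro h
    funext e
    change ξ (A.exoCompl π e) = A.zero
    rw [h, Function.comp_apply, hπ.map_exoCompl hA, hξ.map_zero hA]
  · intro h
    funext e
    have h' := hξ.map_R (hπ.R_exoCompl e)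
    rw [show ξ (A.exoCompl π e) = A.zero from congrFun h e] at h'
    exact hA.R_unique h' (hA.R_zero_right _)

theorem exoLe_antisymm (hξ : A.IsExo ξ) (hπ : A.IsExo π) (h₁ : A.exoLe ξ π)
    (h₂ : A.exoLe π ξ) : ξ = π :=
  funext fun e =>
    calc ξ e = ξ (π e) := congrFun h₁ e
      _ = π (ξ e) := (hπ.comm hA hξ e).symm
      _ = π e := (congrFun h₂ e).symm

theorem comp_exoLe_left (hπ : A.IsExo π) (hξ : A.IsExo ξ) : A.exoLe (π ∘ ξ) π :=
  funext fun e => by simp only [Function.comp_apply, hξ.comm hA hπ, hπ.idem]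

theorem comp_exoLe_comp_right (hπ : A.IsExo π) (hρ : A.IsExo ρ) (h : A.exoLe ξ π) :
    A.exoLe (ξ ∘ ρ) (π ∘ ρ) :=
  funext fun e => by
    simp only [Function.comp_apply, hρ.comm hA hπ (ρ e), hρ.idem]
    exact congrFun h (ρ e)

theorem exoCompl_antitone (hξ : A.IsExo ξ) (hπ : A.IsExo π) (h : A.exoLe ξ π) :
    A.exoLe (A.exoCompl π) (A.exoCompl ξ) := by
  rw [exoLe_iff_comp_exoCompl hA (hπ.exoCompl hA) (hξ.exoCompl hA), hξ.exoCompl_exoCompl hA]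
  funext e
  refine (hπ.exoCompl hA).map_eq_zero_of_le hA (hπ.exoCompl_eq_zero hA (hπ.idem e)) ?_
  rw [congrFun h e]
  exact hξ.le_self (π e)

theorem IsExo.exoSup (hπ : A.IsExo π) (hξ : A.IsExo ξ) : A.IsExo (A.exoSup π ξ) :=
  ((hπ.exoCompl hA).comp hA (hξ.exoCompl hA)).exoCompl hA

theorem exoCompl_exoSup (hπ : A.IsExo π) (hξ : A.IsExo ξ) :
    A.exoCompl (A.exoSup π ξ) = A.exoCompl π ∘ A.exoCompl ξ :=
  ((hπ.exoCompl hA).comp hA (hξ.exoCompl hA)).exoCompl_exoCompl hA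

theorem exoLe_exoSup_left (hπ : A.IsExo π) (hξ : A.IsExo ξ) : A.exoLe π (A.exoSup π ξ) := by
  rw [exoLe_iff_comp_exoCompl hA hπ (hπ.exoSup hA hξ), exoCompl_exoSup hA hπ hξ]
  exact funext fun e => hπ.map_exoCompl hA _

theorem exoLe_exoSup_right (hπ : A.IsExo π) (hξ : A.IsExo ξ) :
    A.exoLe ξ (A.exoSup π ξ) := by
  rw [exoLe_iff_comp_exoCompl hA hξ (hπ.exoSup hA hξ), exoCompl_exoSup hA hπ hξ]
  funext e
  change ξ (A.exoCompl π (A.exoCompl ξ e)) = A.zero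
  rw [(hπ.exoCompl hA).comm hA (hξ.exoCompl hA)]
  exact hξ.map_exoCompl hA _

theorem exoSup_exoLe (hπ : A.IsExo π) (hξ : A.IsExo ξ) (hρ : A.IsExo ρ)
    (h₁ : A.exoLe π ρ) (h₂ : A.exoLe ξ ρ) : A.exoLe (A.exoSup π ξ) ρ := by
  have h := exoCompl_antitone hA (hρ.exoCompl hA)
    ((hπ.exoCompl hA).comp hA (hξ.exoCompl hA))
    (exoLe_comp (exoCompl_antitone hA hπ hρ h₁) (exoCompl_antitone hA hξ hρ h₂))
  rwa [hρ.exoCompl_exoCompl hA] at h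

theorem comp_exoCompl (hπ : A.IsExo π) : π ∘ A.exoCompl π = A.exoBot :=
  funext (hπ.map_exoCompl hA)

theorem exoCompl_comp (hπ : A.IsExo π) : A.exoCompl π ∘ π = A.exoBot :=
  funext fun e => hπ.exoCompl_eq_zero hA (hπ.idem e)

theorem exoSup_exoCompl (hπ : A.IsExo π) : A.exoSup π (A.exoCompl π) = id := by
  rw [exoSup, hπ.exoCompl_exoCompl hA, exoCompl_comp hA hπ, exoCompl_exoBot hA]

theorem exoSup_comp_exoCompl_exoLe (hπ : A.IsExo π) (hξ : A.IsExo ξ) :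
    A.exoLe (A.exoSup π ξ ∘ A.exoCompl π) ξ := by
  rw [exoLe_iff_comp_exoCompl hA ((hπ.exoSup hA hξ).comp hA (hπ.exoCompl hA)) hξ]
  change A.exoSup π ξ ∘ (A.exoCompl π ∘ A.exoCompl ξ) = A.exoBot
  rw [← exoCompl_exoSup hA hπ hξ]
  exact comp_exoCompl hA (hπ.exoSup hA hξ)

theorem exoSup_comp_exoSup_exoLe (hπ : A.IsExo π) (hξ : A.IsExo ξ) (hρ : A.IsExo ρ) :
    A.exoLe (A.exoSup π ξ ∘ A.exoSup π ρ) (A.exoSup π (ξ ∘ ρ)) := by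
  have hπξ := hπ.exoSup hA hξ
  have hπρ := hπ.exoSup hA hρ
  have hπ' := hπ.exoCompl hA
  have hw := hπξ.comp hA hπρ
  rw [exoLe_iff_comp_exoCompl hA hw (hπ.exoSup hA (hξ.comp hA hρ)),
    exoCompl_exoSup hA hπ (hξ.comp hA hρ)]
  change ((A.exoSup π ξ ∘ A.exoSup π ρ) ∘ A.exoCompl π) ∘ A.exoCompl (ξ ∘ ρ) = A.exoBot
  rw [← exoLe_iff_comp_exoCompl hA (hw.comp hA hπ') (hξ.comp hA hρ)]
  exact exoLe_comp
    (exoLe_trans (comp_exoLe_comp_right hA hπξ hπ' (comp_exoLe_left hA hπξ hπρ))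
      (exoSup_comp_exoCompl_exoLe hA hπ hξ))
    (exoLe_trans (comp_exoLe_comp_right hA hπρ hπ' (comp_exoLe_right hπρ))
      (exoSup_comp_exoCompl_exoLe hA hπ hρ))

noncomputable abbrev exoBooleanAlgebra : BooleanAlgebra {π : E → E // A.IsExo π} where
  le x y := A.exoLe x.1 y.1
  le_refl x := exoLe_refl x.2
  le_trans _ _ _ := exoLe_trans
  le_antisymm x y h₁ h₂ := Subtype.ext (exoLe_antisymm hA x.2 y.2 h₁ h₂)
  inf x y := ⟨x.1 ∘ y.1, x.2.comp hA y.2⟩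
  inf_le_left x y := comp_exoLe_left hA x.2 y.2
  inf_le_right _ y := comp_exoLe_right y.2
  le_inf _ _ _ := exoLe_comp
  sup x y := ⟨A.exoSup x.1 y.1, x.2.exoSup hA y.2⟩
  le_sup_left x y := exoLe_exoSup_left hA x.2 y.2
  le_sup_right x y := exoLe_exoSup_right hA x.2 y.2
  sup_le x y z := exoSup_exoLe hA x.2 y.2 z.2
  le_sup_inf x y z := exoSup_comp_exoSup_exoLe hA x.2 y.2 z.2
  top := ⟨id, isExo_id hA⟩
  bot := ⟨A.exoBot, isExo_exoBot hA⟩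
  le_top x := exoLe_id x.1
  bot_le x := exoBot_exoLe x.1
  compl x := ⟨A.exoCompl x.1, x.2.exoCompl hA⟩
  inf_compl_le_bot x := by
    change x.1 ∘ A.exoCompl x.1 = (x.1 ∘ A.exoCompl x.1) ∘ A.exoBot
    rw [comp_exoCompl hA x.2]
    rfl
  top_le_sup_compl x := by
    change A.exoLe id (A.exoSup x.1 (A.exoCompl x.1))
    rw [exoSup_exoCompl hA x.2]
    exact exoLe_id _

end

theorem IsGPEA.listSumsTo_unique (hA : A.IsGPEA) {l : List E} {s t : E}
    (h₁ : A.ListSumsTo l s) (h₂ : A.ListSumsTo l t) : s = t := by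
  induction l generalizing s t with
  | nil => exact h₁.trans h₂.symm
  | cons a l ih =>
    obtain ⟨u, hu, hs⟩ := h₁
    obtain ⟨v, hv, ht⟩ := h₂
    rw [ih hu hv] at hs
    exact hA.R_unique hs ht

theorem IsGPEA.exists_of_listSumsTo_append (hA : A.IsGPEA) {l₁ l₂ : List E} {s : E}
    (h : A.ListSumsTo (l₁ ++ l₂) s) :
    ∃ s₁ s₂, A.ListSumsTo l₁ s₁ ∧ A.ListSumsTo l₂ s₂ ∧ A.R s₁ s₂ s := by
  induction l₁ generalizing s with
  | nil => exact ⟨A.zero, s, rfl, h, hA.R_zero_left s⟩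
  | cons a l ih =>
    obtain ⟨t, ht, hs⟩ := h
    obtain ⟨s₁, s₂, h₁, h₂, h₃⟩ := ih ht
    obtain ⟨as₁, has₁, hfin⟩ := hA.assoc' h₃ hs
    exact ⟨as₁, s₂, ⟨s₁, h₁, has₁⟩, h₂, hfin⟩

namespace IsExo

variable (hA : A.IsGPEA) {π : E → E}
include hA

theorem map_eq_zero_of_listSumsTo (hπ : A.IsExo π) {l : List E} {s : E}
    (h : A.ListSumsTo l s) (hl : ∀ a ∈ l, π a = A.zero) : π s = A.zero := by
  induction l generalizing s with
  | nil =>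
    obtain rfl : s = A.zero := h
    exact hπ.map_zero hA
  | cons a l ih =>
    obtain ⟨t, ht, hs⟩ := h
    exact hπ.map_eq_zero_of_R hA (hl a (by simp)) (ih ht fun b hb => hl b (by simp [hb])) hs

theorem le_of_R_of_le (hπ : A.IsExo π) {x y s b : E} (hx : π x = x) (hy : π y = A.zero)
    (hs : A.R x y s) (hxb : A.le x b) (hyb : A.le y b) : A.le s b := by
  have hxb' : A.le x (π b) := by simpa only [hx] using hπ.mono hxb
  have hyb' : A.le y (A.exoCompl π b) := by
    simpa only [hπ.exoCompl_eq_self hA hy] using (hπ.exoCompl hA).mono hyb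
  exact hA.R_mono hxb' hyb' hs (hπ.R_exoCompl b)

end IsExo

section Orthosums

variable {ι : Type v}

theorem FinsetSumsTo.listSumsTo_toList {g : ι → E} {F : Finset ι} {s : E}
    (h : A.FinsetSumsTo g F s) : A.ListSumsTo (F.toList.map g) s :=
  h F.toList F.nodup_toList (by let := Classical.decEq ι; exact F.toList_toFinset)

theorem finsetSumsTo_empty (g : ι → E) : A.FinsetSumsTo g ∅ A.zero := by
  intro l _ hl
  let := Classical.decEq ι
  obtain rfl : l = [] := List.toFinset_eq_empty_iff l |>.1 hl
  rfl

theorem IsGPEA.finsetSumsTo_singleton (hA : A.IsGPEA) (g : ι → E) (i : ι) :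
    A.FinsetSumsTo g {i} (g i) := by
  intro l hl hli
  let := Classical.decEq ι
  obtain rfl : l = [i] := List.perm_singleton.1 <|
    List.perm_of_nodup_nodup_toFinset_eq hl (List.nodup_singleton i) (by simpa using hli)
  exact ⟨A.zero, rfl, hA.R_zero_right (g i)⟩

theorem IsGPEA.finsetSumsTo_mono (hA : A.IsGPEA) {g : ι → E} {G H : Finset ι} {x y : E}
    (hGH : G ⊆ H) (hx : A.FinsetSumsTo g G x) (hy : A.FinsetSumsTo g H y) : A.le x y := by
  let := Classical.decEq ι
  have hnd : ((H \ G).toList ++ G.toList).Nodup :=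
    (H \ G).nodup_toList.append G.nodup_toList fun a ha hb =>
      (Finset.mem_sdiff.1 (Finset.mem_toList.1 ha)).2 (Finset.mem_toList.1 hb)
  have hH : ((H \ G).toList ++ G.toList).toFinset = H := by
    rw [List.toFinset_append, Finset.toList_toFinset, Finset.toList_toFinset,
      Finset.sdiff_union_of_subset hGH]
  have hsum := hy _ hnd hH
  rw [List.map_append] at hsum
  obtain ⟨s₂, s₁, -, h₁, hr⟩ := hA.exists_of_listSumsTo_append hsum
  obtain rfl : s₁ = x := hA.listSumsTo_unique h₁ hx.listSumsTo_toList
  exact hA.le_of_R_right hr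

variable (hA : A.IsGPEA) {π : ι → E → E} (hexo : ∀ i, A.IsExo (π i))
  (hdisj : ∀ i j, i ≠ j → A.exoDisjoint (π i) (π j))
include hA hexo hdisj

theorem map_listSumsTo_eq_zero {g : ι → E} (hfix : ∀ i, π i (g i) = g i) {j : ι}
    {l : List ι} (hj : j ∉ l) {s : E} (h : A.ListSumsTo (l.map g) s) : π j s = A.zero := by
  refine (hexo j).map_eq_zero_of_listSumsTo hA h ?_
  simp only [List.mem_map]
  rintro _ ⟨i, hi, rfl⟩
  rw [← hfix i]
  exact hdisj j i (by rintro rfl; exact hj hi) (g i)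

theorem listSumsTo_le {g : ι → E} (hfix : ∀ i, π i (g i) = g i) {b : E}
    (hb : ∀ i, A.le (g i) b) {l : List ι} (hl : l.Nodup) {s : E}
    (h : A.ListSumsTo (l.map g) s) : A.le s b := by
  induction l generalizing s with
  | nil =>
    obtain rfl : s = A.zero := h
    exact hA.zero_le b
  | cons j l ih =>
    obtain ⟨t, ht, hs⟩ := h
    rw [List.nodup_cons] at hl
    exact (hexo j).le_of_R_of_le hA (hfix j)
      (map_listSumsTo_eq_zero hA hexo hdisj hfix hl.1 ht) hs (hb j) (ih hl.2 ht)

theorem perp_listSumsTo {g : ι → E} (hfix : ∀ i, π i (g i) = g i) {f : E}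
    (hperp : ∀ i, A.perp f (g i)) {l : List ι} (hl : l.Nodup) {s : E}
    (h : A.ListSumsTo (l.map g) s) : A.perp f s := by
  induction l generalizing s with
  | nil =>
    obtain rfl : s = A.zero := h
    exact ⟨f, hA.R_zero_right f, hA.R_zero_left f⟩
  | cons j l ih =>
    obtain ⟨t, ht, hs⟩ := h
    rw [List.nodup_cons] at hl
    exact (hexo j).perp_of_R hA (hfix j) (map_listSumsTo_eq_zero hA hexo hdisj hfix hl.1 ht)
      hs (hperp j) (ih hl.2 ht)

theorem exists_listSumsTo_of_R {a b c : ι → E} (hr : ∀ i, A.R (a i) (b i) (c i))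
    (ha : ∀ i, π i (a i) = a i) (hb : ∀ i, π i (b i) = b i) {l : List ι} (hl : l.Nodup)
    {s : E} (h : A.ListSumsTo (l.map c) s) :
    ∃ sa sb, A.ListSumsTo (l.map a) sa ∧ A.ListSumsTo (l.map b) sb ∧ A.R sa sb s := by
  induction l generalizing s with
  | nil =>
    obtain rfl : s = A.zero := h
    exact ⟨A.zero, A.zero, rfl, rfl, hA.R_zero_right A.zero⟩
  | cons j l ih =>
    obtain ⟨t, ht, hs⟩ := h
    rw [List.nodup_cons] at hl
    obtain ⟨ta, tb, hta, htb, hab⟩ := ih hl.2 ht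
    -- `b j` commutes with `ta` because `π j` fixes the one and kills the other
    obtain ⟨v₁, hv₁, hav₁⟩ := hA.assoc (hr j) hs
    obtain ⟨bt, hbt, hbtv⟩ := hA.assoc' hab hv₁
    obtain ⟨p, hp₁, hp₂⟩ :=
      (hexo j).perp (hb j) (map_listSumsTo_eq_zero hA hexo hdisj ha hl.1 hta)
    obtain rfl : bt = p := hA.R_unique hbt hp₁
    obtain ⟨v₂, hv₂, htav⟩ := hA.assoc hp₂ hbtv
    obtain ⟨at', hat', hfin⟩ := hA.assoc' htav hav₁
    exact ⟨at', v₂, ⟨ta, hta, hat'⟩, ⟨tb, htb, hv₂⟩, hfin⟩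

theorem isSup_range_of_isOrthosum {g : ι → E} (hfix : ∀ i, π i (g i) = g i) {s : E}
    (hs : A.IsOrthosum g s) : A.IsSup (Set.range g) s := by
  refine ⟨?_, fun b hb => hs.2.2 b ?_⟩
  · rintro _ ⟨i, rfl⟩
    exact hs.2.1 _ ⟨{i}, hA.finsetSumsTo_singleton g i⟩
  · rintro t ⟨F, hF⟩
    exact listSumsTo_le hA hexo hdisj hfix (fun i => hb _ ⟨i, rfl⟩) F.nodup_toList
      hF.listSumsTo_toList

/-- `f ⊕ u` and `u ⊕ f` are the suprema of `{f ⊕ t}` and `{t ⊕ f}` over the finite partial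
orthosums `t`, and these two sets coincide. -/
theorem perp_of_isOrthosum {g : ι → E} (hfix : ∀ i, π i (g i) = g i) {u f Y X : E}
    (hu : A.IsOrthosum g u) (hperp : ∀ i, A.perp f (g i)) (hY : A.R f u Y)
    (hX : A.R u f X) : A.perp f u := by
  have hT : {t | ∃ F, A.FinsetSumsTo g F t}.Nonempty := ⟨A.zero, ∅, finsetSumsTo_empty g⟩
  have hsets : {y | ∃ t ∈ {t | ∃ F, A.FinsetSumsTo g F t}, A.R f t y} =
      {y | ∃ t ∈ {t | ∃ F, A.FinsetSumsTo g F t}, A.R t f y} := by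
    ext y
    refine exists_congr fun t => and_congr_right fun ⟨F, hF⟩ => ?_
    obtain ⟨s, h₁, h₂⟩ :=
      perp_listSumsTo hA hexo hdisj hfix hperp F.nodup_toList hF.listSumsTo_toList
    exact ⟨fun hy => hA.R_unique h₁ hy ▸ h₂, fun hy => hA.R_unique h₂ hy ▸ h₁⟩
  have hYX : Y = X :=
    hA.isSup_unique (hsets ▸ hA.isSup_R_left hu.2 hT hY) (hA.isSup_R_right hu.2 hT hX)
  exact ⟨Y, hY, hYX ▸ hX⟩

theorem le_of_isOrthosum_of_R {a b c : ι → E} (hr : ∀ i, A.R (a i) (b i) (c i))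
    (ha : ∀ i, π i (a i) = a i) (hb : ∀ i, π i (b i) = b i) {sa sb sc t : E}
    (hsa : A.IsOrthosum a sa) (hsb : A.IsOrthosum b sb) (hsc : A.IsOrthosum c sc)
    (ht : A.R sa sb t) : A.le t sc := by
  refine (hA.isSup_R_left hsb.2 ⟨A.zero, ∅, finsetSumsTo_empty b⟩ ht).2 sc ?_
  rintro y ⟨v, ⟨G, hv⟩, hy⟩
  refine (hA.isSup_R_right hsa.2 ⟨A.zero, ∅, finsetSumsTo_empty a⟩ hy).2 sc ?_
  rintro z ⟨w, ⟨F, hw⟩, hz⟩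
  classical
  obtain ⟨cH, hcH⟩ := hsc.1 (F ∪ G)
  obtain ⟨aH, haH⟩ := hsa.1 (F ∪ G)
  obtain ⟨bH, hbH⟩ := hsb.1 (F ∪ G)
  obtain ⟨_, _, haH', hbH', hab⟩ := exists_listSumsTo_of_R hA hexo hdisj hr ha hb
    (F ∪ G).nodup_toList hcH.listSumsTo_toList
  obtain rfl := hA.listSumsTo_unique haH' haH.listSumsTo_toList
  obtain rfl := hA.listSumsTo_unique hbH' hbH.listSumsTo_toList
  exact hA.le_trans (hA.R_mono (hA.finsetSumsTo_mono Finset.subset_union_left hw haH)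
    (hA.finsetSumsTo_mono Finset.subset_union_right hv hbH) hz hab) (hsc.2.1 _ ⟨_, hcH⟩)

end Orthosums

theorem IsExo.defined_of_R (hA : A.IsGPEA) {π : E → E} (hπ : A.IsExo π) {x b c : E}
    (hb : π b = b) (h : A.R (π x) b c) : A.Defined x b := by
  have hc : π c = c := hπ.map_eq_self_of_R hA (hπ.idem x) hb h
  obtain ⟨q, hcq, -⟩ := hπ.perp hc (hπ.map_exoCompl hA x)
  obtain ⟨bx, hbx, hq⟩ := hA.assoc h hcq
  obtain ⟨w, hbw, hwb⟩ := hπ.perp hb (hπ.map_exoCompl hA x)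
  obtain rfl : bx = w := hA.R_unique hbx hbw
  obtain ⟨ax, hax, hfin⟩ := hA.assoc' hwb hq
  obtain rfl : ax = x := hA.R_unique hax (hπ.R_exoCompl x)
  exact ⟨q, hfin⟩

def IsPointwiseOrthosum (A : PartialAlg E) {ι : Type v} (π : ι → E → E) (σ : E → E) : Prop :=
  ∀ e, A.IsOrthosum (fun i => π i e) (σ e)

namespace IsPointwiseOrthosum

section
variable {ι : Type v} {π : ι → E → E} {σ : E → E}

theorem congr (hA : A.IsGPEA) (hσ : A.IsPointwiseOrthosum π σ) {x y : E}
    (h : ∀ i, π i x = π i y) : σ x = σ y := by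
  have hx := (hσ x).2
  simp only [h] at hx
  exact hA.isSup_unique hx (hσ y).2

variable (hA : A.IsGPEA) (hexo : ∀ i, A.IsExo (π i))
  (hdisj : ∀ i j, i ≠ j → A.exoDisjoint (π i) (π j)) (hσ : A.IsPointwiseOrthosum π σ)
include hA hexo hdisj hσ

theorem isSup_range (e : E) : A.IsSup (Set.range fun i => π i e) (σ e) :=
  isSup_range_of_isOrthosum hA hexo hdisj (fun i => (hexo i).idem e) (hσ e)

theorem le_self (e : E) : A.le (σ e) e :=
  (hσ.isSup_range hA hexo hdisj e).2 e (by rintro _ ⟨i, rfl⟩; exact (hexo i).le_self e)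

theorem apply_eq (i : ι) (e : E) : π i (σ e) = π i e := by
  have hle : A.le (π i e) (σ e) := (hσ.isSup_range hA hexo hdisj e).1 _ ⟨i, rfl⟩
  refine hA.le_antisymm ((hexo i).mono (hσ.le_self hA hexo hdisj e)) ?_
  simpa only [(hexo i).idem] using (hexo i).mono hle

theorem idem (e : E) : σ (σ e) = σ e :=
  hσ.congr hA (hσ.apply_eq hA hexo hdisj · e)

end

variable {ι : Type u} {π : ι → E → E} {σ : E → E} (hA : A.IsGPEA) (hCO : A.IsCOGPEA)
  (hexo : ∀ i, A.IsExo (π i)) (hdisj : ∀ i j, i ≠ j → A.exoDisjoint (π i) (π j))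
  (hσ : A.IsPointwiseOrthosum π σ)
include hA hCO hexo hdisj hσ

theorem map_R {e f s : E} (h : A.R e f s) : A.R (σ e) (σ f) (σ s) := by
  have hπσ := hσ.apply_eq hA hexo hdisj
  obtain ⟨t, ht⟩ := (hCO.2 _ (σ f) ⟨π, hexo, hdisj, fun i => (hexo i).idem f⟩ (hσ f) (σ e)).1
    fun i => (hexo i).defined_of_R hA ((hexo i).idem f) (by rw [hπσ]; exact (hexo i).map_R h)
  have hts : σ s = σ t := hσ.congr hA fun i => by
    have ht' := (hexo i).map_R ht
    rw [hπσ, hπσ] at ht'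
    exact hA.R_unique ((hexo i).map_R h) ht'
  have hst : A.le t (σ s) := le_of_isOrthosum_of_R hA hexo hdisj (fun i => (hexo i).map_R h)
    (fun i => (hexo i).idem e) (fun i => (hexo i).idem f) (hσ e) (hσ f) (hσ s) ht
  rwa [hA.le_antisymm hst (hts ▸ hσ.le_self hA hexo hdisj t)] at ht

theorem perp {e f : E} (he : σ e = e) (hf : σ f = A.zero) : A.perp e f := by
  have hπf (i : ι) : π i f = A.zero :=
    hA.eq_zero_of_le_zero (hf ▸ (hσ.isSup_range hA hexo hdisj f).1 _ ⟨i, rfl⟩)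
  have hperp (i : ι) : A.perp f (π i e) := ((hexo i).perp ((hexo i).idem e) (hπf i)).symm
  have hos := hσ e
  rw [he] at hos
  have hCO₂ := hCO.2 _ e ⟨π, hexo, hdisj, fun i => (hexo i).idem e⟩ hos f
  obtain ⟨Y, hY⟩ := hCO₂.1 fun i => (hperp i).imp fun _ h => h.1
  obtain ⟨X, hX⟩ := hCO₂.2 fun i => (hperp i).imp fun _ h => h.2
  exact (perp_of_isOrthosum hA hexo hdisj (fun i => (hexo i).idem e) hos hperp hY hX).symm

theorem isExo : A.IsExo σ :=
  ⟨fun _ _ _ => hσ.map_R hA hCO hexo hdisj, hσ.idem hA hexo hdisj, hσ.le_self hA hexo hdisj,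
    fun _ _ => hσ.perp hA hCO hexo hdisj⟩

theorem isExoLUB : A.IsExoLUB (Set.range π) σ := by
  refine ⟨hσ.isExo hA hCO hexo hdisj, ?_, fun β _ hβ => funext fun e => hσ.congr hA fun i => ?_⟩
  · rintro _ ⟨i, rfl⟩
    exact funext fun e => (hσ.apply_eq hA hexo hdisj i e).symm
  · exact congrFun (hβ _ ⟨i, rfl⟩) e

end IsPointwiseOrthosum

theorem exists_isPointwiseOrthosum {ι : Type u} (hCO : A.IsCOGPEA) {π : ι → E → E}
    (hexo : ∀ i, A.IsExo (π i)) (hdisj : ∀ i j, i ≠ j → A.exoDisjoint (π i) (π j)) :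
    ∃ σ, A.IsPointwiseOrthosum π σ :=
  ⟨_, fun e => (hCO.1 (fun i => π i e) ⟨π, hexo, hdisj, fun i => (hexo i).idem e⟩).choose_spec⟩

theorem exists_isExoLUB (hA : A.IsGPEA) (hCO : A.IsCOGPEA) {ι : Type u} {π : ι → E → E}
    (hexo : ∀ i, A.IsExo (π i)) (hdisj : ∀ i j, i ≠ j → A.exoDisjoint (π i) (π j)) :
    ∃ σ, A.IsExoLUB (Set.range π) σ ∧ A.IsPointwiseOrthosum π σ := by
  obtain ⟨σ, hσ⟩ := exists_isPointwiseOrthosum hCO hexo hdisj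
  exact ⟨σ, hσ.isExoLUB hA hCO hexo hdisj, hσ⟩

theorem exists_isLUB_exo_of_pairwise_disjoint (hA : A.IsGPEA) (hCO : A.IsCOGPEA) :
    letI := exoBooleanAlgebra hA
    ∀ D : Set {π : E → E // A.IsExo π}, D.Pairwise Disjoint → ∃ d, IsLUB D d := by
  let := exoBooleanAlgebra hA
  intro D hD
  have hdisj (i j : D) (hij : i ≠ j) : A.exoDisjoint i.1.1 j.1.1 :=
    congrFun (congrArg Subtype.val (disjoint_iff.1 (hD i.2 j.2 (Subtype.coe_ne_coe.2 hij))))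
  obtain ⟨σ, hσ, -⟩ := exists_isExoLUB hA hCO (fun i : D => i.1.2) hdisj
  refine ⟨⟨σ, hσ.1⟩, fun x hx => hσ.2.1 x.1 ⟨⟨x, hx⟩, rfl⟩, fun b hb => ?_⟩
  exact hσ.2.2 b.1 b.2 (by rintro _ ⟨i, rfl⟩; exact hb i.2)

noncomputable abbrev exoCompleteBooleanAlgebra (hA : A.IsGPEA) (hCO : A.IsCOGPEA) :
    CompleteBooleanAlgebra {π : E → E // A.IsExo π} :=
  letI := exoBooleanAlgebra hA
  CompleteBooleanAlgebra.ofIsLUB <|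
    exists_isLUB_of_forall_pairwise_disjoint (exists_isLUB_exo_of_pairwise_disjoint hA hCO)

end GPEApaper.PartialAlg

open GPEApaper PartialAlg in
/-- Theorem 5.5 and Corollary 5.6: in a COGPEA, every pairwise disjoint family
(πᵢ) in ΓEX(E) has a supremum σ = ⋁ᵢ πᵢ in the boolean algebra ΓEX(E), and
σ e = ⋁ᵢ πᵢ e = ⊕ᵢ πᵢ e for every e ∈ E. Consequently, the exocenter of a
COGPEA is a complete boolean algebra. -/
theorem stmt_12 {E : Type u} (A : PartialAlg E) (hA : A.IsGPEA)
    (hCO : A.IsCOGPEA)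
    {ι : Type u} (π : ι → E → E) (hexo : ∀ i, A.IsExo (π i))
    (hdisj : ∀ i j, i ≠ j → A.exoDisjoint (π i) (π j)) :
    (∃ σ : E → E, A.IsExoLUB (Set.range π) σ ∧
      ∀ e : E, A.IsSup (Set.range fun i => π i e) (σ e) ∧
        A.IsOrthosum (fun i => π i e) (σ e)) ∧
    ∃ B : CompleteBooleanAlgebra {π : E → E // A.IsExo π}, letI := B;
      ∀ x y : {π : E → E // A.IsExo π}, x ≤ y ↔ A.exoLe x.1 y.1 := by
  obtain ⟨σ, hlub, hσ⟩ := exists_isExoLUB hA hCO hexo hdisj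
  exact ⟨⟨σ, hlub, fun e => ⟨hσ.isSup_range hA hexo hdisj e, hσ e⟩⟩,
    exoCompleteBooleanAlgebra hA hCO, fun _ _ => Iff.rfl⟩
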